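/- arXiv:1404.4401 — 2 statements merged into one kernel-verified Lean document; each statement's English description precedes it below -/
import Mathlib

section
/- Let a = (a^{ij}(x)) be a function on ℝ^d with values in the set of nonnegative symmetric d×d matrices such that a and all its partial derivatives up to second order are bounded in magnitude by a constant K. Then for every symmetric d×d matrix V, every x ∈ ℝ^d and every k ∈ {1,…,d}, one has |∑_{i,j} (∂_k a^{ij})(x) V^{ij}|² ≤ N ∑_{i,j,l} a^{ij}(x) V^{il} V^{jl}, where N is a constant depending only on K and d. -/
/-!
Diagonalise `V = ∑ₘ μₘ wₘ wₘᵀ` with orthonormal `wₘ` and put `qₘ(y) = wₘᵀ a(y) wₘ`. The left side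
becomes `(∑ₘ μₘ ∂ₖqₘ(x))²` and the sum on the right becomes `∑ₘ μₘ² qₘ(x)`. Each `qₘ` is
nonnegative with second derivatives bounded by `K d`, and a nonnegative function with `|f''| ≤ M`
satisfies `f'(x)² ≤ 4 M f(x)`, because the quadratic `f(x) + t f'(x) + M t²` dominates
`f(x + t) ≥ 0` and so has nonpositive discriminant. Cauchy–Schwarz in `m` finishes the proof.
-/

open Finset Matrix

theorem ContDiff.image_add_le_of_norm_iteratedFDeriv_two_le {E : Type*} [NormedAddCommGroup E]
    [NormedSpace ℝ E] {f : E → ℝ} {M : ℝ} (hf : ContDiff ℝ 2 f)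
    (hM : ∀ y, ‖iteratedFDeriv ℝ 2 f y‖ ≤ M) (x h : E) :
    f (x + h) ≤ f x + fderiv ℝ f x h + M * ‖h‖ ^ 2 := by
  have hdiff : Differentiable ℝ f := hf.differentiable (by norm_num)
  have hdiff' : Differentiable ℝ (fderiv ℝ f) :=
    (hf.fderiv_right (m := 1) le_rfl).differentiable (by norm_num)
  have hLip : ∀ y, ‖fderiv ℝ f y - fderiv ℝ f x‖ ≤ M * ‖y - x‖ := fun y =>
    convex_univ.norm_image_sub_le_of_norm_fderiv_le (fun z _ => hdiff' z)
      (fun z _ => by simpa [← norm_iteratedFDeriv_one, norm_iteratedFDeriv_fderiv] using hM z)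
      (Set.mem_univ x) (Set.mem_univ y)
  have hTaylor := (convex_closedBall x ‖h‖).norm_image_sub_le_of_norm_fderiv_le'
    (fun z _ => hdiff z) (fun z hz => (hLip z).trans (mul_le_mul_of_nonneg_left
      (by simpa [dist_eq_norm] using hz) ((norm_nonneg _).trans (hM x))))
    (Metric.mem_closedBall_self (norm_nonneg h)) (by simp : x + h ∈ Metric.closedBall x ‖h‖)
  rw [add_sub_cancel_left, Real.norm_eq_abs] at hTaylor
  linarith [le_abs_self (f (x + h) - f x - fderiv ℝ f x h)]

theorem ContDiff.sq_fderiv_le_of_nonneg {E : Type*} [NormedAddCommGroup E]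
    [NormedSpace ℝ E] {f : E → ℝ} {M : ℝ} (hf : ContDiff ℝ 2 f) (hpos : ∀ y, 0 ≤ f y)
    (hM : ∀ y, ‖iteratedFDeriv ℝ 2 f y‖ ≤ M) (x v : E) :
    fderiv ℝ f x v ^ 2 ≤ 4 * (M * ‖v‖ ^ 2) * f x := by
  have h := discrim_le_zero (a := M * ‖v‖ ^ 2) (b := fderiv ℝ f x v) (c := f x) fun t => by
    have := hf.image_add_le_of_norm_iteratedFDeriv_two_le hM x (t • v)
    rw [map_smul, norm_smul, Real.norm_eq_abs, mul_pow, sq_abs, smul_eq_mul] at this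
    linarith [hpos (x + t • v)]
  rw [discrim] at h
  linarith

section QuadraticForm

variable {E : Type*} [NormedAddCommGroup E] [NormedSpace ℝ E] {n : Type*} [Fintype n]
  {a : E → Matrix n n ℝ} (w : n → ℝ)

theorem contDiff_sum_sum_mul_mul {k : WithTop ℕ∞} (ha : ∀ i j, ContDiff ℝ k fun y => a y i j) :
    ContDiff ℝ k fun y => ∑ i, ∑ j, a y i j * w i * w j :=
  ContDiff.sum fun i _ => ContDiff.sum fun j _ => ((ha i j).mul contDiff_const).mul contDiff_const

theorem fderiv_sum_sum_mul_mul_apply {x : E} (ha : ∀ i j, DifferentiableAt ℝ (fun y => a y i j) x)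
    (v : E) :
    fderiv ℝ (fun y => ∑ i, ∑ j, a y i j * w i * w j) x v
      = ∑ i, ∑ j, fderiv ℝ (fun y => a y i j) x v * w i * w j := by
  rw [fderiv_fun_sum fun i _ => DifferentiableAt.fun_sum fun j _ =>
    ((ha i j).mul_const _).mul_const _]
  simp only [_root_.sum_apply]
  refine Finset.sum_congr rfl fun i _ => ?_
  rw [fderiv_fun_sum fun j _ => ((ha i j).mul_const _).mul_const _]
  simp only [_root_.sum_apply]
  refine Finset.sum_congr rfl fun j _ => ?_
  rw [fderiv_mul_const ((ha i j).mul_const _), fderiv_mul_const (ha i j)]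
  simp only [_root_.smul_apply, smul_eq_mul]
  ring

theorem norm_iteratedFDeriv_sum_sum_mul_mul_le {k : ℕ} {K : ℝ} {y : E}
    (ha : ∀ i j, ContDiff ℝ k fun y => a y i j)
    (hK : ∀ i j, ‖iteratedFDeriv ℝ k (fun y => a y i j) y‖ ≤ K) :
    ‖iteratedFDeriv ℝ k (fun y => ∑ i, ∑ j, a y i j * w i * w j) y‖ ≤ K * (∑ i, |w i|) ^ 2 := by
  have hsmul : (fun y => ∑ i, ∑ j, a y i j * w i * w j)
      = fun y => ∑ i, ∑ j, (w i * w j) • a y i j := by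
    ext y
    exact sum_congr rfl fun i _ => sum_congr rfl fun j _ => by rw [smul_eq_mul]; ring
  rw [hsmul, iteratedFDeriv_fun_sum_apply fun i _ => (ContDiff.sum fun j _ =>
    (ha i j).const_smul _).contDiffAt]
  calc _ ≤ ∑ i, ‖iteratedFDeriv ℝ k (fun y => ∑ j, (w i * w j) • a y i j) y‖ := norm_sum_le _ _
    _ ≤ ∑ i, ∑ j, |w i| * |w j| * K := by
      gcongr with i
      rw [iteratedFDeriv_fun_sum_apply fun j _ => ((ha i j).const_smul _).contDiffAt]
      refine (norm_sum_le _ _).trans (sum_le_sum fun j _ => ?_)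
      rw [iteratedFDeriv_const_smul_apply' (ha i j).contDiffAt, norm_smul, Real.norm_eq_abs,
        abs_mul]
      exact mul_le_mul_of_nonneg_left (hK i j) (by positivity)
    _ = K * (∑ i, |w i|) ^ 2 := by
      rw [sq, sum_mul_sum, mul_sum]
      simp_rw [mul_sum]
      exact sum_congr rfl fun i _ => sum_congr rfl fun j _ => by ring

end QuadraticForm

section SymmetricMatrix

variable {n : Type*} [Fintype n]

theorem Matrix.IsSymm.exists_eq_mul_diagonal_mul_transpose [DecidableEq n] {V : Matrix n n ℝ}
    (hV : V.IsSymm) : ∃ (U : Matrix n n ℝ) (μ : n → ℝ), Uᵀ * U = 1 ∧ V = U * diagonal μ * Uᵀ := by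
  have hH : V.IsHermitian := by rwa [IsHermitian, conjTranspose_eq_transpose_of_trivial]
  refine ⟨hH.eigenvectorUnitary, hH.eigenvalues, ?_, ?_⟩
  · simpa [star_eq_conjTranspose] using Unitary.coe_star_mul_self hH.eigenvectorUnitary
  · conv_lhs => rw [hH.spectral_theorem, Unitary.conjStarAlgAut_apply]
    simp [star_eq_conjTranspose]

theorem sum_mul_mul_diagonal_mul_transpose [DecidableEq n] (B U : Matrix n n ℝ) (f : n → ℝ) :
    ∑ i, ∑ j, B i j * (U * diagonal f * Uᵀ) i j = ∑ m, f m * ∑ i, ∑ j, B i j * U i m * U j m := by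
  simp only [mul_apply (M := U * diagonal f), mul_diagonal, transpose_apply, mul_sum]
  rw [sum_comm_cycle]
  exact sum_congr rfl fun m _ => sum_congr rfl fun i _ => sum_congr rfl fun j _ => by ring

theorem sq_sum_mul_le_of_forall_sq_quadratic_le {A B V : Matrix n n ℝ} {C : ℝ} (hV : V.IsSymm)
    (hAB : ∀ w : n → ℝ, ∑ i, w i ^ 2 = 1 →
      (∑ i, ∑ j, B i j * w i * w j) ^ 2 ≤ C * ∑ i, ∑ j, A i j * w i * w j) :
    (∑ i, ∑ j, B i j * V i j) ^ 2 ≤ Fintype.card n * C * ∑ i, ∑ j, ∑ l, A i j * V i l * V j l := by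
  classical
  obtain ⟨U, μ, hU, rfl⟩ := hV.exists_eq_mul_diagonal_mul_transpose
  have hcol : ∀ m, ∑ i, U i m ^ 2 = 1 := fun m => by
    simpa [mul_apply, sq] using congrFun (congrFun hU m) m
  have hsq : (U * diagonal μ * Uᵀ) * (U * diagonal μ * Uᵀ)ᵀ
      = U * diagonal (fun m => μ m ^ 2) * Uᵀ := by
    have : (U * diagonal μ * Uᵀ) * (U * diagonal μ * Uᵀ)ᵀ
        = U * diagonal μ * (Uᵀ * U) * diagonal μ * Uᵀ := by
      simp only [transpose_mul, transpose_transpose, diagonal_transpose, Matrix.mul_assoc]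
    rw [this, hU, Matrix.mul_one, Matrix.mul_assoc U, diagonal_mul_diagonal]
    simp only [sq]
  have hVV : ∀ i j, ∑ l, (U * diagonal μ * Uᵀ) i l * (U * diagonal μ * Uᵀ) j l
      = (U * diagonal (fun m => μ m ^ 2) * Uᵀ) i j := fun i j => by
    rw [← hsq, mul_apply]
    rfl
  have hA : ∑ i, ∑ j, ∑ l, A i j * (U * diagonal μ * Uᵀ) i l * (U * diagonal μ * Uᵀ) j l
      = ∑ i, ∑ j, A i j * (U * diagonal (fun m => μ m ^ 2) * Uᵀ) i j := by
    simp_rw [mul_assoc (A _ _), ← mul_sum, hVV]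
  rw [sum_mul_mul_diagonal_mul_transpose, hA, sum_mul_mul_diagonal_mul_transpose, mul_sum]
  calc _ ≤ Fintype.card n * ∑ m, (μ m * ∑ i, ∑ j, B i j * U i m * U j m) ^ 2 := by
        simpa using sq_sum_le_card_mul_sum_sq (s := univ)
          (f := fun m => μ m * ∑ i, ∑ j, B i j * U i m * U j m)
    _ ≤ ∑ m, Fintype.card n * C * (μ m ^ 2 * ∑ i, ∑ j, A i j * U i m * U j m) := by
        rw [mul_sum]
        refine sum_le_sum fun m _ => ?_
        rw [mul_assoc, mul_pow]
        refine mul_le_mul_of_nonneg_left ?_ (Nat.cast_nonneg _)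
        linarith [mul_le_mul_of_nonneg_left (hAB _ (hcol m)) (sq_nonneg (μ m))]

end SymmetricMatrix

/-- Lemma 4.2 (from [OR2]): if `a` is a nonnegative symmetric matrix-valued function,
twice continuously differentiable, with `a` and its derivatives up to second order
bounded by `K`, then `|D_k a^{ij} V^{ij}|² ≤ N a^{ij} V^{ik} V^{jk}` with `N = N(K,d)`. -/
theorem stmt_0 (d : ℕ) (K : ℝ) :
    ∃ N : ℝ, ∀ a : EuclideanSpace ℝ (Fin d) → Matrix (Fin d) (Fin d) ℝ,
      (∀ i j, ContDiff ℝ 2 fun x => a x i j) →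
      (∀ x i j, a x i j = a x j i) →
      (∀ x (z : Fin d → ℝ), 0 ≤ ∑ i, ∑ j, a x i j * z i * z j) →
      (∀ x i j n, n ≤ 2 → ‖iteratedFDeriv ℝ n (fun y => a y i j) x‖ ≤ K) →
      ∀ V : Matrix (Fin d) (Fin d) ℝ, (∀ i j, V i j = V j i) →
      ∀ (x : EuclideanSpace ℝ (Fin d)) (k : Fin d),
        (∑ i, ∑ j, fderiv ℝ (fun y => a y i j) x (EuclideanSpace.single k 1) * V i j) ^ 2
          ≤ N * ∑ i, ∑ j, ∑ l, a x i j * V i l * V j l := by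
  refine ⟨d * (4 * (max K 0 * d)), fun a ha _ hpos hbnd V hV x k => ?_⟩
  set e : EuclideanSpace ℝ (Fin d) := EuclideanSpace.single k 1
  have hdir : ∀ w : Fin d → ℝ, ∑ i, w i ^ 2 = 1 →
      (∑ i, ∑ j, fderiv ℝ (fun y => a y i j) x e * w i * w j) ^ 2
        ≤ 4 * (max K 0 * d) * ∑ i, ∑ j, a x i j * w i * w j := by
    intro w hw
    have hℓ1 : (∑ i, |w i|) ^ 2 ≤ d := by
      simpa [sq_abs, hw] using sq_sum_le_card_mul_sum_sq (s := univ) (f := fun i => |w i|)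
    have hD2 : ∀ y, ‖iteratedFDeriv ℝ 2 (fun y => ∑ i, ∑ j, a y i j * w i * w j) y‖
        ≤ max K 0 * d := fun y =>
      (norm_iteratedFDeriv_sum_sum_mul_mul_le w ha fun i j =>
        (hbnd y i j 2 le_rfl).trans (le_max_left _ _)).trans
        (mul_le_mul_of_nonneg_left hℓ1 (le_max_right _ _))
    have := (contDiff_sum_sum_mul_mul w ha).sq_fderiv_le_of_nonneg (hpos · w) hD2 x e
    rwa [fderiv_sum_sum_mul_mul_apply w fun i j => (ha i j).differentiable (by norm_num) x,
      PiLp.norm_single, norm_one, one_pow, mul_one] at this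
  simpa using sq_sum_mul_le_of_forall_sq_quadratic_le (IsSymm.ext fun i j => hV j i) hdir
end

section
/- Let α be a symmetric positive semidefinite d×d real matrix, let β^i (i = 1,…,d) be M×M real matrices, h ∈ ℝ^d, and K₀ ≥ 0. Suppose that for all k,l ∈ {1,…,M} and all λ ∈ ℝ^d, |∑_i (β^{ikl} − δ^{kl} h^i) λ_i|² ≤ K₀ ∑_{i,j} α^{ij} λ_i λ_j. Then there is a constant N = N(K₀, M) such that for all u ∈ ℝ^M and all z₁,…,z_d ∈ ℝ^M, ⟨u, ∑_i β^i z_i⟩ ≤ N (∑_{i,j} α^{ij} ⟨z_i, z_j⟩)^{1/2} |u| + ∑_i h^i ⟨z_i, u⟩. -/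
/-- Remark 2.5: the degeneracy condition implies the bilinear estimate
`⟨u, β^i z_i⟩ ≤ N (α^{ij}⟨z_i,z_j⟩)^{1/2} |u| + h^i ⟨z_i, u⟩` with `N = N(K₀, M)`. -/
theorem stmt_8 (d M : ℕ) (K₀ : ℝ) (hK₀ : 0 ≤ K₀) :
    ∃ N : ℝ, ∀ (α : Matrix (Fin d) (Fin d) ℝ),
      (∀ i j, α i j = α j i) →
      (∀ lam : Fin d → ℝ, 0 ≤ ∑ i, ∑ j, α i j * lam i * lam j) →
      ∀ (β : Fin d → Matrix (Fin M) (Fin M) ℝ) (h : Fin d → ℝ),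
      (∀ (k l : Fin M) (lam : Fin d → ℝ),
        (∑ i, (β i k l - (if k = l then h i else 0)) * lam i) ^ 2
          ≤ K₀ * ∑ i, ∑ j, α i j * lam i * lam j) →
      ∀ (u : Fin M → ℝ) (z : Fin d → Fin M → ℝ),
        (∑ k, u k * ∑ i, ∑ l, β i k l * z i l)
          ≤ N * Real.sqrt (∑ i, ∑ j, α i j * ∑ k, z i k * z j k)
              * Real.sqrt (∑ k, (u k) ^ 2)
            + ∑ i, h i * ∑ k, z i k * u k := by
  refine ⟨M * Real.sqrt K₀, ?_⟩
  intro α hsym hpsd β h hdeg u z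
  set Q : Fin M → ℝ := fun l => ∑ i, ∑ j, α i j * z i l * z j l with hQdef
  have hQ : ∀ l, 0 ≤ Q l := fun l => hpsd (fun i => z i l)
  -- rearrange the α-quadratic form
  have hS : (∑ i, ∑ j, α i j * ∑ k, z i k * z j k) = ∑ l, Q l := by
    simp only [hQdef, Finset.mul_sum]
    have h1 : (∑ i : Fin d, ∑ j : Fin d, ∑ k : Fin M, α i j * (z i k * z j k))
        = ∑ i : Fin d, ∑ k : Fin M, ∑ j : Fin d, α i j * (z i k * z j k) :=
      Finset.sum_congr rfl fun i _ => Finset.sum_comm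
    rw [h1, Finset.sum_comm]
    exact Finset.sum_congr rfl fun l _ => Finset.sum_congr rfl fun i _ =>
      Finset.sum_congr rfl fun j _ => by ring
  -- split the left-hand side
  have hsplit : (∑ k, u k * ∑ i, ∑ l, β i k l * z i l)
      = (∑ k, ∑ l, u k * ∑ i, (β i k l - (if k = l then h i else 0)) * z i l)
        + ∑ i, h i * ∑ k, z i k * u k := by
    have hswap : (∑ i, h i * ∑ k, z i k * u k) = ∑ k, ∑ i, h i * (z i k * u k) := by
      rw [Finset.sum_comm]
      exact Finset.sum_congr rfl fun i _ => by rw [Finset.mul_sum]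
    rw [hswap, ← Finset.sum_add_distrib]
    refine Finset.sum_congr rfl fun k _ => ?_
    simp only [Finset.mul_sum, sub_mul, Finset.sum_sub_distrib, ite_mul, zero_mul,
      mul_sub, mul_ite, mul_zero]
    have h0 : ∀ x : Fin M, (∑ x1 : Fin d, if k = x then u k * (h x1 * z x1 x) else 0)
        = if k = x then ∑ x1 : Fin d, u k * (h x1 * z x1 x) else 0 := by
      intro x; split <;> simp
    simp only [h0, Finset.sum_ite_eq Finset.univ k, Finset.mem_univ, if_true]
    have h1 : ∑ i, u k * (h i * z i k) = ∑ i, h i * (z i k * u k) :=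
      Finset.sum_congr rfl fun i _ => by ring
    have h2 : (∑ y : Fin M, ∑ x : Fin d, u k * (β x k y * z x y))
        = ∑ x : Fin d, ∑ y : Fin M, u k * (β x k y * z x y) := Finset.sum_comm
    rw [h1, h2]
    ring
  rw [hsplit, add_le_add_iff_right, hS]
  -- pointwise bound
  have hT : ∀ (k l : Fin M), u k * (∑ i, (β i k l - (if k = l then h i else 0)) * z i l)
      ≤ |u k| * (Real.sqrt K₀ * Real.sqrt (Q l)) := by
    intro k l
    have habs : |∑ i, (β i k l - (if k = l then h i else 0)) * z i l|
        ≤ Real.sqrt (K₀ * Q l) :=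
      Real.abs_le_sqrt (hdeg k l (fun i => z i l))
    calc u k * (∑ i, (β i k l - (if k = l then h i else 0)) * z i l)
        ≤ |u k * (∑ i, (β i k l - (if k = l then h i else 0)) * z i l)| := le_abs_self _
      _ = |u k| * |∑ i, (β i k l - (if k = l then h i else 0)) * z i l| := abs_mul _ _
      _ ≤ |u k| * Real.sqrt (K₀ * Q l) :=
          mul_le_mul_of_nonneg_left habs (abs_nonneg _)
      _ = |u k| * (Real.sqrt K₀ * Real.sqrt (Q l)) := by rw [Real.sqrt_mul hK₀]
  have hsum : (∑ k, ∑ l, u k * ∑ i, (β i k l - (if k = l then h i else 0)) * z i l)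
      ≤ Real.sqrt K₀ * ((∑ k, |u k|) * (∑ l, Real.sqrt (Q l))) := by
    calc (∑ k, ∑ l, u k * ∑ i, (β i k l - (if k = l then h i else 0)) * z i l)
        ≤ ∑ k, ∑ l, |u k| * (Real.sqrt K₀ * Real.sqrt (Q l)) :=
          Finset.sum_le_sum fun k _ => Finset.sum_le_sum fun l _ => hT k l
      _ = ∑ k, |u k| * (Real.sqrt K₀ * ∑ l, Real.sqrt (Q l)) :=
          Finset.sum_congr rfl fun k _ => by simp only [Finset.mul_sum]
      _ = (∑ k, |u k|) * (Real.sqrt K₀ * ∑ l, Real.sqrt (Q l)) := by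
          rw [← Finset.sum_mul]
      _ = Real.sqrt K₀ * ((∑ k, |u k|) * (∑ l, Real.sqrt (Q l))) := by ring
  refine hsum.trans ?_
  -- Cauchy–Schwarz type bounds via Chebyshev
  have hA : (∑ k, |u k|) ≤ Real.sqrt M * Real.sqrt (∑ k, (u k) ^ 2) := by
    rw [← Real.sqrt_mul (by positivity)]
    rw [show (∑ k, |u k|) = Real.sqrt ((∑ k, |u k|) ^ 2) by
      rw [Real.sqrt_sq (Finset.sum_nonneg fun k _ => abs_nonneg _)]]
    apply Real.sqrt_le_sqrt
    have := sq_sum_le_card_mul_sum_sq (s := (Finset.univ : Finset (Fin M)))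
      (f := fun k => |u k|)
    simpa [sq_abs] using this
  have hB : (∑ l, Real.sqrt (Q l)) ≤ Real.sqrt M * Real.sqrt (∑ l, Q l) := by
    rw [← Real.sqrt_mul (by positivity)]
    rw [show (∑ l, Real.sqrt (Q l)) = Real.sqrt ((∑ l, Real.sqrt (Q l)) ^ 2) by
      rw [Real.sqrt_sq (Finset.sum_nonneg fun l _ => Real.sqrt_nonneg _)]]
    apply Real.sqrt_le_sqrt
    have := sq_sum_le_card_mul_sum_sq (s := (Finset.univ : Finset (Fin M)))
      (f := fun l => Real.sqrt (Q l))
    simpa [Real.sq_sqrt (hQ _)] using this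
  have hAB : (∑ k, |u k|) * (∑ l, Real.sqrt (Q l))
      ≤ (Real.sqrt M * Real.sqrt (∑ k, (u k) ^ 2)) * (Real.sqrt M * Real.sqrt (∑ l, Q l)) :=
    mul_le_mul hA hB (Finset.sum_nonneg fun l _ => Real.sqrt_nonneg _) (by positivity)
  calc Real.sqrt K₀ * ((∑ k, |u k|) * (∑ l, Real.sqrt (Q l)))
      ≤ Real.sqrt K₀ * ((Real.sqrt M * Real.sqrt (∑ k, (u k) ^ 2))
          * (Real.sqrt M * Real.sqrt (∑ l, Q l))) :=
        mul_le_mul_of_nonneg_left hAB (Real.sqrt_nonneg _)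
    _ = (Real.sqrt M * Real.sqrt M) * Real.sqrt K₀
          * Real.sqrt (∑ l, Q l) * Real.sqrt (∑ k, (u k) ^ 2) := by ring
    _ = ↑M * Real.sqrt K₀ * Real.sqrt (∑ l, Q l) * Real.sqrt (∑ k, (u k) ^ 2) := by
        rw [Real.mul_self_sqrt (Nat.cast_nonneg M)]
end
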